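/- arXiv:1512.08867 — 7 statements merged into one kernel-verified Lean document; each statement's English description precedes it below -/
import Mathlib

section
/- An update of a routing table can only increase its quality: for any routing table rt containing an entry for destination dip, and any valid route r (i.e., the validity flag of r is 'valid', its sequence number is 0 iff its sequence-number-status flag is 'unknown', and if the status flag is 'unknown' then its hop count is 1), one has rt ⊑_dip update(rt, r), where update is the AODV routing table update function. -/
/-- IP addresses / node identifiers. -/
abbrev IP := ℕ

/-- Increment of sequence numbers: `inc n = n+1` for `n ≠ 0`, `inc 0 = 0`. -/
def inc (n : ℕ) : ℕ := if n = 0 then 0 else n + 1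

/-- Data of a routing table entry (besides its destination):
sequence number, sequence-number-status flag (`true` = known),
validity flag (`true` = valid), hop count, next hop, precursors. -/
structure Route where
  dsn : ℕ
  known : Bool
  valid : Bool
  hops : ℕ
  nhip : IP
  pre : Set IP

/-- A routing table: at most one entry per destination. -/
abbrev RT := IP → Option Route

/-- Destination sequence number (0 if no entry). -/
def sqn (rt : RT) (dip : IP) : ℕ := (rt dip).elim 0 Route.dsn

/-- Hop count of the entry for `dip` (0 if no entry; only used where defined). -/
def dhops (rt : RT) (dip : IP) : ℕ := (rt dip).elim 0 Route.hops

/-- Next hop of the entry for `dip` (0 if no entry; only used where defined). -/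
def nhop (rt : RT) (dip : IP) : IP := (rt dip).elim 0 Route.nhip

/-- Net sequence number. -/
def nsqn (rt : RT) (dip : IP) : ℕ :=
  match rt dip with
  | none => 0
  | some r => if r.valid then r.dsn else r.dsn - 1

/-- Quality preorder on routing tables w.r.t. destination `dip`. -/
def rtord (dip : IP) (rt rt' : RT) : Prop :=
  nsqn rt dip < nsqn rt' dip ∨
    (nsqn rt dip = nsqn rt' dip ∧ dhops rt dip ≥ dhops rt' dip)

/-- Induced equivalence. -/
def rtequiv (dip : IP) (rt rt' : RT) : Prop := rtord dip rt rt' ∧ rtord dip rt' rt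

/-- Strict quality order. -/
def rtsord (dip : IP) (rt rt' : RT) : Prop := rtord dip rt rt' ∧ ¬ rtequiv dip rt rt'

/-- Add precursors to a route. -/
def addpre (r : Route) (npre : Set IP) : Route := { r with pre := r.pre ∪ npre }

/-- Add precursors to the entry for destination `d` of a routing table. -/
def addprecRT (rt : RT) (d : IP) (npre : Set IP) : RT :=
  fun x => if x = d then (rt d).map (fun r => addpre r npre) else rt x

/-- The AODV routing table update function: update `rt` with a route to
destination `dip` whose remaining data is `r`. -/
def update (rt : RT) (dip : IP) (r : Route) : RT :=
  fun d =>
    if d = dip then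
      match rt dip with
      | none => some r
      | some s =>
        if s.dsn < r.dsn ∨ (s.dsn = r.dsn ∧ (s.hops > r.hops ∨ s.valid = false)) then
          some (addpre r s.pre)
        else if r.known = false then
          some { addpre r s.pre with dsn := s.dsn }
        else
          some (addpre s r.pre)
    else rt d

/-- Invalidate the routes listed in the partial function `dests`, copying
the sequence numbers from `dests`. -/
def invalidate (rt : RT) (dests : IP → Option ℕ) : RT :=
  fun d =>
    match rt d, dests d with
    | some r, some rsn => some { r with dsn := rsn, valid := false }
    | o, _ => o

/-- The set of known destinations of a routing table. -/
def kD (rt : RT) : Set IP := { d | (rt d).isSome }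

/-! The update changes only the entry for its own destination, so the question is local to an
existing entry `s` and its replacement. The replacement either carries a larger sequence number,
or the same one with no more hops, or it is `s` with more precursors. The delicate cases involve
an invalid `s`, whose net sequence number is `s.dsn - 1`: it is strictly below the new sequence
number unless both are `0`, and then the new route has unknown sequence number, hence one hop,
which is no more than the hop count of `s`. -/

namespace Route

def nsqn (s : Route) : ℕ := if s.valid then s.dsn else s.dsn - 1

def QualityLE (s s' : Route) : Prop :=
  s.nsqn < s'.nsqn ∨ (s.nsqn = s'.nsqn ∧ s'.hops ≤ s.hops)

def merge (s r : Route) : Route :=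
  if s.dsn < r.dsn ∨ (s.dsn = r.dsn ∧ (s.hops > r.hops ∨ s.valid = false)) then
    addpre r s.pre
  else if r.known = false then
    { addpre r s.pre with dsn := s.dsn }
  else
    addpre s r.pre

theorem qualityLE_merge {s r : Route} (hs : 1 ≤ s.hops) (hval : r.valid = true)
    (hsqn : r.dsn = 0 ↔ r.known = false) (hunk : r.known = false → r.hops = 1) :
    QualityLE s (merge s r) := by
  unfold merge
  split_ifs with hbetter hknown
  · have hunk0 : r.dsn = 0 → r.hops = 1 := fun h => hunk (hsqn.mp h)
    cases hsv : s.valid <;>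
      simp only [QualityLE, nsqn, addpre, hsv, hval, Bool.false_eq_true, if_true, if_false,
        Bool.true_eq_false, or_false] at hbetter ⊢ <;> omega
  · have hr0 : r.dsn = 0 := hsqn.mpr hknown
    have hr1 : r.hops = 1 := hunk hknown
    push Not at hbetter
    cases hsv : s.valid <;>
      simp only [QualityLE, nsqn, addpre, hsv, hval, Bool.false_eq_true, if_true, if_false,
        ne_eq, not_true_eq_false, and_false, imp_false, true_and] at hbetter ⊢ <;> omega
  · exact Or.inr ⟨rfl, le_rfl⟩

end Route

theorem nsqn_of_eq_some {rt : RT} {dip : IP} {s : Route} (h : rt dip = some s) :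
    nsqn rt dip = s.nsqn := by
  simp only [nsqn, h, Route.nsqn]

theorem dhops_of_eq_some {rt : RT} {dip : IP} {s : Route} (h : rt dip = some s) :
    dhops rt dip = s.hops := by
  simp only [dhops, h, Option.elim]

theorem rtord_of_eq_some {dip : IP} {rt rt' : RT} {s s' : Route} (hs : rt dip = some s)
    (hs' : rt' dip = some s') (hle : s.QualityLE s') : rtord dip rt rt' := by
  rwa [rtord, nsqn_of_eq_some hs, nsqn_of_eq_some hs', dhops_of_eq_some hs,
    dhops_of_eq_some hs']

theorem rtord_of_eq {dip : IP} {rt rt' : RT} (h : rt dip = rt' dip) : rtord dip rt rt' :=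
  Or.inr ⟨by rw [nsqn, nsqn, h], by rw [dhops, dhops, h]⟩

theorem update_of_ne {rt : RT} {d x : IP} (r : Route) (hx : x ≠ d) : update rt d r x = rt x :=
  if_neg hx

theorem update_self_of_eq_some {rt : RT} {d : IP} {s : Route} (r : Route) (hs : rt d = some s) :
    update rt d r d = some (s.merge r) := by
  simp only [update, hs, Route.merge, if_true]
  split_ifs <;> rfl

/-- An update can only increase the quality of a routing table. -/
theorem quality_update (rt : RT) (dip d : IP) (r : Route)
    (hdip : (rt dip).isSome)
    (hhops1 : ∀ d' r', rt d' = some r' → 1 ≤ r'.hops)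
    (hval : r.valid = true)
    (hsqn : r.dsn = 0 ↔ r.known = false)
    (hunk : r.known = false → r.hops = 1) :
    rtord dip rt (update rt d r) := by
  obtain rfl | hd := eq_or_ne dip d
  · obtain ⟨s, hs⟩ := Option.isSome_iff_exists.mp hdip
    exact rtord_of_eq_some hs (update_self_of_eq_some r hs)
      (Route.qualityLE_merge (hhops1 dip s hs) hval hsqn hunk)
  · exact rtord_of_eq (update_of_ne r hd).symm
end

section
/- Invalidating routes does not change the quality of a routing table, provided every invalidated destination has a valid entry and is invalidated with the incremented sequence number: if rt contains an entry for dip, and dests is a partial function from IP to sequence numbers such that every (rip, rsn) ∈ dests satisfies that rt has a valid entry for rip and rsn = inc(sqn(rt, rip)), then rt ≈_dip invalidate(rt, dests). -/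
/-- Invalidating routes with incremented sequence numbers does not change the
quality of a routing table. -/
theorem quality_invalidate (rt : RT) (dip : IP) (dests : IP → Option ℕ)
    (hdip : (rt dip).isSome)
    (hdests : ∀ rip rsn, dests rip = some rsn →
      (∃ r, rt rip = some r ∧ r.valid = true) ∧ rsn = inc (sqn rt rip)) :
    rtequiv dip rt (invalidate rt dests) := by
  have key : nsqn (invalidate rt dests) dip = nsqn rt dip ∧
      dhops (invalidate rt dests) dip = dhops rt dip := by
    cases hd : dests dip with
    | none =>
      unfold nsqn dhops invalidate
      cases rt dip <;> simp [hd]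
    | some rsn =>
      obtain ⟨⟨r, hr, hv⟩, hrsn⟩ := hdests dip rsn hd
      unfold nsqn dhops invalidate
      rw [hr]
      simp [hd, hv, hrsn, sqn, hr, inc]
      split <;> omega
  constructor <;> exact Or.inr ⟨by omega, by omega⟩
end

section
/- Invalidation cannot decrease a destination sequence number when applied with incremented sequence numbers: if every pair (rip, rsn) ∈ dests satisfies rsn = inc(sqn(rt, rip)), then for every destination d, sqn(rt, d) ≤ sqn(invalidate(rt, dests), d). -/
/-- Invalidation with incremented sequence numbers never decreases any
destination sequence number. -/
theorem sqn_invalidate (rt : RT) (dests : IP → Option ℕ)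
    (hdests : ∀ rip rsn, dests rip = some rsn → rsn = inc (sqn rt rip)) :
    ∀ d, sqn rt d ≤ sqn (invalidate rt dests) d := by
  intro d
  unfold sqn invalidate
  cases hrt : rt d with
  | none => simp
  | some r =>
    cases hd : dests d with
    | none => simp
    | some rsn =>
      have h := hdests d rsn hd
      simp [hrt, h, inc, sqn]
      split <;> simp_all <;> omega
end

section
/- The update operation never decreases a destination sequence number: for any routing table rt and any route r satisfying the preconditions of update (r is valid, π₂(r) = 0 iff π₃(r) = unknown, and π₃(r) = unknown implies π₅(r) = 1), and for every destination d, sqn(rt, d) ≤ sqn(update(rt, r), d). -/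
/-- The update operation never decreases a destination sequence number. -/
theorem sqn_update (rt : RT) (dip : IP) (r : Route)
    (hval : r.valid = true)
    (hsqn : r.dsn = 0 ↔ r.known = false)
    (hunk : r.known = false → r.hops = 1) :
    ∀ d, sqn rt d ≤ sqn (update rt dip r) d := by
  intro d
  unfold sqn update
  by_cases hd : d = dip
  · subst hd
    simp only [if_pos rfl]
    cases h : rt d with
    | none => simp
    | some s =>
      simp only [h]
      split_ifs with h1 h2 <;> simp [addpre] <;> omega
  · simp [hd]
end

section
/- If all entries of a routing table rt have hop count ≥ 1, then all entries of update(rt, r) have hop count ≥ 1, provided the route r used for the update has hop count ≥ 1. -/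
/-- If all entries of `rt` have hop count ≥ 1 and the route used for an update
has hop count ≥ 1, then all entries of the updated table have hop count ≥ 1. -/
theorem hops_update (rt : RT) (dip : IP) (r : Route)
    (hrt : ∀ d r', rt d = some r' → 1 ≤ r'.hops)
    (hr : 1 ≤ r.hops) :
    ∀ d r', update rt dip r d = some r' → 1 ≤ r'.hops := by
  intro d r' h
  unfold update at h
  split at h
  · cases hs : rt dip with
    | none => simp [hs] at h; subst h; exact hr
    | some s =>
      simp only [hs] at h
      split at h
      · simp at h; subst h; exact hr
      · split at h
        · simp at h; subst h; exact hr
        · simp at h; subst h; exact hrt dip s hs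
  · exact hrt d r' h
end

section
/- Suppose a routing table rt satisfies the invariant that every entry with sequence number 0 has sequence-number-status flag 'unknown'. Then for any route r with π₂(r) = 0 ⟺ π₃(r) = unknown, the routing table update(rt, r) also satisfies this invariant. -/
/-- If every entry of `rt` with sequence number 0 has status flag 'unknown',
then the same holds after an update with a route `r` satisfying
`π₂(r) = 0 ⟺ π₃(r) = unknown`. -/
theorem zero_sqn_unknown_update (rt : RT) (dip : IP) (r : Route)
    (hrt : ∀ d r', rt d = some r' → r'.dsn = 0 → r'.known = false)
    (hr : r.dsn = 0 ↔ r.known = false) :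
    ∀ d r', update rt dip r d = some r' → r'.dsn = 0 → r'.known = false := by
  intro d r' h hdsn
  unfold update at h
  by_cases hd : d = dip
  · simp [hd] at h
    cases hrt' : rt dip with
    | none =>
      rw [hrt'] at h
      simp at h
      subst h; exact hr.mp hdsn
    | some s =>
      rw [hrt'] at h
      by_cases h1 : s.dsn < r.dsn ∨ (s.dsn = r.dsn ∧ (s.hops > r.hops ∨ s.valid = false))
      · simp [h1] at h; subst h; simpa [addpre] using hr.mp hdsn
      · by_cases h2 : r.known = false
        · simp [h1, h2] at h; subst h
          simpa [addpre] using h2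
        · simp [h1, h2] at h; subst h
          simp [addpre] at hdsn ⊢
          exact hrt dip s hrt' hdsn
  · simp [hd] at h
    exact hrt d r' h hdsn
end

section
/- Suppose a routing table rt satisfies: every entry with sequence-number-status flag 'unknown' has hop count 1, and every entry with hop count 1 has its destination equal to its next hop. Then for any route r with the same two properties (if π₃(r) = unknown then π₅(r) = 1; and if π₅(r) = 1 then π₁(r) = π₆(r)), the table update(rt, r) satisfies both properties as well. -/
/-- If in `rt` every entry with unknown status has hop count 1 and every entry
with hop count 1 has its destination as next hop, and the route `r` (for
destination `dip`) has the same two properties, then both properties are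
preserved by the update. -/
theorem unknown_hops_nhip_update (rt : RT) (dip : IP) (r : Route)
    (hrt1 : ∀ d r', rt d = some r' → r'.known = false → r'.hops = 1)
    (hrt2 : ∀ d r', rt d = some r' → r'.hops = 1 → d = r'.nhip)
    (hr1 : r.known = false → r.hops = 1)
    (hr2 : r.hops = 1 → dip = r.nhip) :
    (∀ d r', update rt dip r d = some r' → r'.known = false → r'.hops = 1) ∧
    (∀ d r', update rt dip r d = some r' → r'.hops = 1 → d = r'.nhip) := by
  constructor <;> intro d r' h hk <;>
  · by_cases hd : d = dip
    · subst hd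
      unfold update at h
      simp only [if_pos rfl] at h
      rcases hrt : rt d with _ | s <;> rw [hrt] at h
      · cases h
        first
        | exact hr1 hk
        | exact hr2 hk
      · by_cases h1 : s.dsn < r.dsn ∨ (s.dsn = r.dsn ∧ (s.hops > r.hops ∨ s.valid = false)) <;>
          by_cases h2 : r.known = false <;>
          simp only [h1, h2, if_true, if_false, if_pos, if_neg, not_false_iff,
            reduceIte] at h <;> cases h <;>
          first
          | exact hr1 hk
          | exact hr2 hk
          | exact hrt1 d s hrt hk
          | exact hrt2 d s hrt hk
    · unfold update at h
      rw [if_neg hd] at h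
      first
      | exact hrt1 d r' h hk
      | exact hrt2 d r' h hk
end
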